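/- Let A be a bounded linear operator on H. Then η(A)⁴ ≤ ‖ |A|² + |A|⁴ ‖_ber · ‖ |A*|² + |A|⁴ ‖_ber. -/

import Mathlib

/-!
Fix a unit vector `x` and put `a = ‖A x‖`, `b = ‖A* x‖`, `s = ‖|A|² x‖`. Then
`|⟨A x, x⟩|² ≤ a b` and `‖A x‖⁴ = ⟨|A|² x, x⟩² ≤ s²`, so by Cauchy–Schwarz in `ℝ²`
`|⟨A x, x⟩|² + ‖A x‖⁴ ≤ a b + s s ≤ √((a² + s²)(b² + s²))`, and the two factors under the root
are exactly `⟨(|A|² + |A|⁴) x, x⟩` and `⟨(|A*|² + |A|⁴) x, x⟩`.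
-/

open scoped InnerProductSpace
open ContinuousLinearMap

variable {H : Type*} [NormedAddCommGroup H] [InnerProductSpace ℂ H] [CompleteSpace H]
variable {Ω : Type*} [Nonempty Ω]

/-- Berezin number: `ber(T) = sup_{λ∈Ω} |⟨T k̂_λ, k̂_λ⟩|`. -/
noncomputable def ber (k : Ω → H) (T : H →L[ℂ] H) : ℝ :=
  ⨆ lam : Ω, ‖⟪T (k lam), k lam⟫_ℂ‖

/-- Berezin norm: `‖T‖_ber = sup_{λ,μ∈Ω} |⟨T k̂_λ, k̂_μ⟩|`. -/
noncomputable def bernorm (k : Ω → H) (T : H →L[ℂ] H) : ℝ :=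
  ⨆ p : Ω × Ω, ‖⟪T (k p.1), k p.2⟫_ℂ‖

/-- Least Berezin number: `c(T) = inf_{λ∈Ω} |⟨T k̂_λ, k̂_λ⟩|`. -/
noncomputable def lber (k : Ω → H) (T : H →L[ℂ] H) : ℝ :=
  ⨅ lam : Ω, ‖⟪T (k lam), k lam⟫_ℂ‖

/-- Davis-Wielandt-Berezin radius: `η(T) = sup_{λ∈Ω} √(|⟨T k̂_λ, k̂_λ⟩|² + ‖T k̂_λ‖⁴)`. -/
noncomputable def eta (k : Ω → H) (T : H →L[ℂ] H) : ℝ :=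
  ⨆ lam : Ω, Real.sqrt (‖⟪T (k lam), k lam⟫_ℂ‖ ^ 2 + ‖T (k lam)‖ ^ 4)

/-- The modulus `|A| = (A*A)^{1/2}`. -/
noncomputable def absop (A : H →L[ℂ] H) : H →L[ℂ] H := CFC.sqrt (adjoint A * A)

section Pointwise

variable {E : Type*} [NormedAddCommGroup E] [InnerProductSpace ℂ E] [CompleteSpace E]

lemma absop_sq (A : E →L[ℂ] E) : absop A ^ 2 = adjoint A * A :=
  CFC.sq_sqrt _ (by rw [← star_eq_adjoint]; exact star_mul_self_nonneg A)

lemma re_inner_absop_sq_apply (A : E →L[ℂ] E) (x : E) :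
    RCLike.re ⟪(absop A ^ 2) x, x⟫_ℂ = ‖A x‖ ^ 2 := by
  rw [absop_sq, apply_norm_sq_eq_inner_adjoint_left]; rfl

lemma re_inner_absop_pow_four_apply (A : E →L[ℂ] E) (x : E) :
    RCLike.re ⟪(absop A ^ 4) x, x⟫_ℂ = ‖(absop A ^ 2) x‖ ^ 2 := by
  have hsa : adjoint (absop A ^ 2) = absop A ^ 2 := by
    rw [absop_sq, ← star_eq_adjoint A]; exact (IsSelfAdjoint.star_mul_self A).adjoint_eq
  rw [apply_norm_sq_eq_inner_adjoint_left, hsa, show 4 = 2 * 2 from rfl, pow_mul, sq]; rfl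

lemma sq_norm_apply_le_norm_absop_sq_apply (A : E →L[ℂ] E) {x : E} (hx : ‖x‖ = 1) :
    ‖A x‖ ^ 2 ≤ ‖(absop A ^ 2) x‖ :=
  calc ‖A x‖ ^ 2 = RCLike.re ⟪(absop A ^ 2) x, x⟫_ℂ := (re_inner_absop_sq_apply A x).symm
    _ ≤ ‖⟪(absop A ^ 2) x, x⟫_ℂ‖ := RCLike.re_le_norm _
    _ ≤ ‖(absop A ^ 2) x‖ := (norm_inner_le_norm _ _).trans_eq (by rw [hx, mul_one])

lemma norm_inner_apply_self_le_norm_adjoint_apply (A : E →L[ℂ] E) {x : E} (hx : ‖x‖ = 1) :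
    ‖⟪A x, x⟫_ℂ‖ ≤ ‖adjoint A x‖ := by
  rw [← adjoint_inner_right]
  exact (norm_inner_le_norm _ _).trans_eq (by rw [hx, one_mul])

lemma sq_add_pow_four_sq_le {n a b s : ℝ} (hn : 0 ≤ n) (hna : n ≤ a) (hnb : n ≤ b)
    (has : a ^ 2 ≤ s) : (n ^ 2 + a ^ 4) ^ 2 ≤ (a ^ 2 + s ^ 2) * (b ^ 2 + s ^ 2) := by
  have ha : 0 ≤ a := hn.trans hna
  calc (n ^ 2 + a ^ 4) ^ 2 ≤ (a * b + s * s) ^ 2 := by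
        gcongr
        · nlinarith
        · nlinarith
    _ ≤ (a ^ 2 + s ^ 2) * (b ^ 2 + s ^ 2) := by nlinarith [sq_nonneg (a * s - b * s)]

lemma davisWielandt_sq_le (A : E →L[ℂ] E) {x : E} (hx : ‖x‖ = 1) :
    (‖⟪A x, x⟫_ℂ‖ ^ 2 + ‖A x‖ ^ 4) ^ 2 ≤
      ‖⟪(absop A ^ 2 + absop A ^ 4) x, x⟫_ℂ‖ *
        ‖⟪(absop (adjoint A) ^ 2 + absop A ^ 4) x, x⟫_ℂ‖ := by
  have hre : ∀ T : E →L[ℂ] E, ∀ y : E, RCLike.re ⟪(T ^ 2 + absop A ^ 4) y, y⟫_ℂ =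
      RCLike.re ⟪(T ^ 2) y, y⟫_ℂ + ‖(absop A ^ 2) y‖ ^ 2 := fun T y => by
    rw [add_apply, inner_add_left, map_add, re_inner_absop_pow_four_apply]
  have hre₁ := hre (absop A) x
  have hre₂ := hre (absop (adjoint A)) x
  rw [re_inner_absop_sq_apply] at hre₁ hre₂
  calc (‖⟪A x, x⟫_ℂ‖ ^ 2 + ‖A x‖ ^ 4) ^ 2
      ≤ (‖A x‖ ^ 2 + ‖(absop A ^ 2) x‖ ^ 2) * (‖adjoint A x‖ ^ 2 + ‖(absop A ^ 2) x‖ ^ 2) :=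
        sq_add_pow_four_sq_le (norm_nonneg _)
          ((norm_inner_le_norm _ _).trans_eq (by rw [hx, mul_one]))
          (norm_inner_apply_self_le_norm_adjoint_apply A hx)
          (sq_norm_apply_le_norm_absop_sq_apply A hx)
    _ ≤ _ := by
        rw [← hre₁, ← hre₂]
        exact mul_le_mul (RCLike.re_le_norm _) (RCLike.re_le_norm _) (by rw [hre₂]; positivity)
          (norm_nonneg _)

end Pointwise

lemma iSup_pow_le_of_forall_pow_le {ι : Type*} {f : ι → ℝ} (hf : ∀ i, 0 ≤ f i) {n : ℕ}
    (hn : n ≠ 0) {C : ℝ} (hC : 0 ≤ C) (h : ∀ i, f i ^ n ≤ C) : (⨆ i, f i) ^ n ≤ C := by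
  set r := C ^ (n⁻¹ : ℝ)
  have hr : 0 ≤ r := by positivity
  have hrn : r ^ n = C := Real.rpow_inv_natCast_pow hC hn
  have hle : ⨆ i, f i ≤ r :=
    Real.iSup_le (fun i => (pow_le_pow_iff_left₀ (hf i) hr hn).1 (hrn ▸ h i)) hr
  exact hrn ▸ pow_le_pow_left₀ (Real.iSup_nonneg hf) hle n

section Berezin

variable {E Ω : Type*} [NormedAddCommGroup E] [InnerProductSpace ℂ E]

lemma bernorm_nonneg (k : Ω → E) (T : E →L[ℂ] E) : 0 ≤ bernorm k T :=
  Real.iSup_nonneg fun _ => norm_nonneg _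

lemma norm_inner_le_bernorm {k : Ω → E} (hk : ∀ lam, ‖k lam‖ = 1) (T : E →L[ℂ] E) (lam mu : Ω) :
    ‖⟪T (k lam), k mu⟫_ℂ‖ ≤ bernorm k T := by
  refine le_ciSup (f := fun p : Ω × Ω => ‖⟪T (k p.1), k p.2⟫_ℂ‖) ⟨‖T‖, ?_⟩ (lam, mu)
  rintro _ ⟨p, rfl⟩
  calc ‖⟪T (k p.1), k p.2⟫_ℂ‖ ≤ ‖T (k p.1)‖ * ‖k p.2‖ := norm_inner_le_norm _ _
    _ ≤ ‖T‖ * ‖k p.1‖ * ‖k p.2‖ := by gcongr; exact T.le_opNorm _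
    _ = ‖T‖ := by rw [hk, hk, mul_one, mul_one]

end Berezin

theorem stmt10 (k : Ω → H) (hk : ∀ lam, ‖k lam‖ = 1) (A : H →L[ℂ] H) :
    (eta k A) ^ 4 ≤
      bernorm k ((absop A) ^ 2 + (absop A) ^ 4) *
        bernorm k ((absop (adjoint A)) ^ 2 + (absop A) ^ 4) := by
  refine iSup_pow_le_of_forall_pow_le (fun _ => Real.sqrt_nonneg _) four_ne_zero
    (mul_nonneg (bernorm_nonneg _ _) (bernorm_nonneg _ _)) fun lam => ?_
  rw [show 4 = 2 * 2 from rfl, pow_mul, Real.sq_sqrt (by positivity)]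
  exact (davisWielandt_sq_le A (hk lam)).trans <| mul_le_mul
    (norm_inner_le_bernorm hk _ lam lam) (norm_inner_le_bernorm hk _ lam lam)
    (norm_nonneg _) (bernorm_nonneg _ _)
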